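/- Fix m ∈ ℕ and define v_m : (0,∞) → ℝ by v_m(u) = (15/16) ∫₀^π (cosh u + sinh u·cos φ)^m · sin⁵φ dφ. Then v_m is twice differentiable and v_m''(u) + 6 coth u · v_m'(u) = m(m+6)·v_m(u) for all u ∈ (0,∞). -/

import Mathlib

/-!
Write `g = cosh u + sinh u cos φ`. Then `∂ᵤ² g = g`, `(∂ᵤ g)² - g² = -sin² φ` and
`cosh u ∂ᵤ g - sinh u g = cos φ`, so that, after differentiating under the integral sign,
`sinh u (∂ᵤ² + 6 coth u ∂ᵤ - m (m + 6)) (g ^ m) sin⁵ φ = ∂_φ (m g ^ (m - 1) sin⁶ φ)`.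
The right-hand side integrates to zero over `[0, π]` because `sin` vanishes at both ends.
-/

open Real

/-- The analytically-continued eigenfunction
`v_m(u) = (15/16) ∫₀^π (cosh u + sinh u cos φ)^m sin⁵φ dφ`. -/
noncomputable def hyperbolicEigenfunction (m : ℕ) (u : ℝ) : ℝ :=
  (15 / 16 : ℝ) * ∫ φ in (0 : ℝ)..π,
    (Real.cosh u + Real.sinh u * Real.cos φ) ^ m * Real.sin φ ^ 5

open Set Function MeasureTheory

theorem intervalIntegral.hasDerivAt_integral_of_continuous_deriv {E : Type*}
    [NormedAddCommGroup E] [NormedSpace ℝ E] {F F' : ℝ → ℝ → E} {a b : ℝ}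
    (hF : ∀ x, Continuous (F x)) (hF' : Continuous (uncurry F'))
    (hderiv : ∀ x t, HasDerivAt (F · t) (F' x t) x) (x₀ : ℝ) :
    HasDerivAt (fun x => ∫ t in a..b, F x t) (∫ t in a..b, F' x₀ t) x₀ := by
  obtain ⟨C, hC⟩ : ∃ C, ∀ p ∈ Metric.closedBall x₀ 1 ×ˢ uIcc a b, ‖uncurry F' p‖ ≤ C :=
    ((isCompact_closedBall x₀ 1).prod isCompact_uIcc).exists_bound_of_continuousOn
      hF'.continuousOn
  refine (hasDerivAt_integral_of_dominated_loc_of_deriv_le (bound := fun _ => C)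
    (Metric.closedBall_mem_nhds x₀ one_pos) (.of_forall fun x => (hF x).aestronglyMeasurable)
    ((hF x₀).intervalIntegrable a b) (hF'.uncurry_left x₀).aestronglyMeasurable
    ?_ intervalIntegrable_const ?_).2
  · exact ae_of_all _ fun t ht x hx => hC (x, t) ⟨hx, uIoc_subset_uIcc ht⟩
  · exact ae_of_all _ fun t _ x _ => hderiv x t

namespace hyperbolicEigenfunction

noncomputable def hypCos (u φ : ℝ) : ℝ := cosh u + sinh u * cos φ

noncomputable def hypCosDeriv (u φ : ℝ) : ℝ := sinh u + cosh u * cos φ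

lemma hasDerivAt_hypCos (u φ : ℝ) : HasDerivAt (hypCos · φ) (hypCosDeriv u φ) u :=
  (hasDerivAt_cosh u).fun_add ((hasDerivAt_sinh u).mul_const (cos φ))

lemma hasDerivAt_hypCosDeriv (u φ : ℝ) : HasDerivAt (hypCosDeriv · φ) (hypCos u φ) u :=
  (hasDerivAt_sinh u).fun_add ((hasDerivAt_cosh u).mul_const (cos φ))

lemma hasDerivAt_hypCos_right (u φ : ℝ) : HasDerivAt (hypCos u) (-(sinh u * sin φ)) φ :=
  (((hasDerivAt_cos φ).const_mul (sinh u)).const_add (cosh u)).congr_deriv (mul_neg _ _)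

noncomputable def integrand (m : ℕ) (u φ : ℝ) : ℝ := hypCos u φ ^ m * sin φ ^ 5

noncomputable def integrand' (m : ℕ) (u φ : ℝ) : ℝ :=
  m * hypCos u φ ^ (m - 1) * hypCosDeriv u φ * sin φ ^ 5

noncomputable def integrand'' (m : ℕ) (u φ : ℝ) : ℝ :=
  m * ((m - 1 : ℕ) * hypCos u φ ^ (m - 1 - 1) * hypCosDeriv u φ ^ 2 + hypCos u φ ^ m) *
    sin φ ^ 5

lemma continuous_integrand (m : ℕ) : Continuous (uncurry (integrand m)) := by
  unfold integrand hypCos uncurry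
  fun_prop

lemma continuous_integrand' (m : ℕ) : Continuous (uncurry (integrand' m)) := by
  unfold integrand' hypCos hypCosDeriv uncurry
  fun_prop

lemma continuous_integrand'' (m : ℕ) : Continuous (uncurry (integrand'' m)) := by
  unfold integrand'' hypCos hypCosDeriv uncurry
  fun_prop

lemma hasDerivAt_integrand (m : ℕ) (u φ : ℝ) :
    HasDerivAt (integrand m · φ) (integrand' m u φ) u :=
  ((hasDerivAt_hypCos u φ).fun_pow m).mul_const (sin φ ^ 5)

lemma hasDerivAt_integrand' (m : ℕ) (u φ : ℝ) :
    HasDerivAt (integrand' m · φ) (integrand'' m u φ) u := by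
  refine (((((hasDerivAt_hypCos u φ).fun_pow (m - 1)).const_mul (m : ℝ)).fun_mul
    (hasDerivAt_hypCosDeriv u φ)).mul_const (sin φ ^ 5)).congr_deriv ?_
  rcases m with _ | m
  · simp [integrand'']
  · simp only [integrand'', Nat.add_sub_cancel, pow_succ]
    ring

lemma hasDerivAt_boundaryTerm (m : ℕ) (u φ : ℝ) :
    HasDerivAt (fun φ => m * (hypCos u φ ^ (m - 1) * sin φ ^ 6))
      (sinh u * integrand'' m u φ + 6 * cosh u * integrand' m u φ
        - m * (m + 6) * sinh u * integrand m u φ) φ := by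
  refine ((((hasDerivAt_hypCos_right u φ).fun_pow (m - 1)).fun_mul
    ((hasDerivAt_sin φ).fun_pow 6)).const_mul _).congr_deriv ?_
  have hc : cosh u ^ 2 - sinh u ^ 2 = 1 := cosh_sq_sub_sinh_sq u
  have hs : sin φ ^ 2 + cos φ ^ 2 = 1 := sin_sq_add_cos_sq φ
  simp only [integrand, integrand', integrand'', hypCos, hypCosDeriv]
  rcases m with _ | _ | n
  · simp
  · simp only [Nat.sub_self, pow_zero]
    push_cast
    linear_combination (-6 * sin φ ^ 5 * cos φ) * hc
  · simp only [Nat.add_sub_cancel]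
    push_cast
    linear_combination (n + 2) * (cosh u + sinh u * cos φ) ^ n * sin φ ^ 5 *
      ((n + 1) * sinh u * ((1 - cos φ ^ 2) * hc - hs) - 6 * (cosh u + sinh u * cos φ) * cos φ * hc)

lemma integral_radialOperator_eq_zero (m : ℕ) (u : ℝ) :
    sinh u * (∫ φ in (0)..π, integrand'' m u φ) + 6 * cosh u * (∫ φ in (0)..π, integrand' m u φ)
      - m * (m + 6) * sinh u * (∫ φ in (0)..π, integrand m u φ) = 0 := by
  have h₀ : IntervalIntegrable (integrand m u) volume 0 π :=
    ((continuous_integrand m).uncurry_left u).intervalIntegrable 0 π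
  have h₁ : IntervalIntegrable (integrand' m u) volume 0 π :=
    ((continuous_integrand' m).uncurry_left u).intervalIntegrable 0 π
  have h₂ : IntervalIntegrable (integrand'' m u) volume 0 π :=
    ((continuous_integrand'' m).uncurry_left u).intervalIntegrable 0 π
  have hFTC := intervalIntegral.integral_eq_sub_of_hasDerivAt
    (fun φ _ => hasDerivAt_boundaryTerm m u φ)
    (((h₂.const_mul _).add (h₁.const_mul _)).sub (h₀.const_mul _))
  rw [intervalIntegral.integral_sub ((h₂.const_mul _).add (h₁.const_mul _)) (h₀.const_mul _),
    intervalIntegral.integral_add (h₂.const_mul _) (h₁.const_mul _),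
    intervalIntegral.integral_const_mul, intervalIntegral.integral_const_mul,
    intervalIntegral.integral_const_mul] at hFTC
  simpa using hFTC

end hyperbolicEigenfunction

open hyperbolicEigenfunction

/-- `v_m` is twice differentiable on `(0,∞)` and satisfies
`v_m'' + 6 coth u · v_m' = m(m+6) v_m` there. -/
theorem hyperbolicEigenfunction_ode (m : ℕ) :
    ∀ u ∈ Set.Ioi (0 : ℝ),
      DifferentiableAt ℝ (hyperbolicEigenfunction m) u ∧
      DifferentiableAt ℝ (deriv (hyperbolicEigenfunction m)) u ∧
      deriv (deriv (hyperbolicEigenfunction m)) u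
        + 6 * (Real.cosh u / Real.sinh u) * deriv (hyperbolicEigenfunction m) u
        = (m : ℝ) * ((m : ℝ) + 6) * hyperbolicEigenfunction m u := by
  intro u hu
  have hv : ∀ u, HasDerivAt (hyperbolicEigenfunction m)
      (15 / 16 * ∫ φ in (0)..π, integrand' m u φ) u := fun u =>
    (intervalIntegral.hasDerivAt_integral_of_continuous_deriv (continuous_integrand m).uncurry_left
      (continuous_integrand' m) (hasDerivAt_integrand m) u).const_mul _
  have hv' : ∀ u, HasDerivAt (fun u => 15 / 16 * ∫ φ in (0)..π, integrand' m u φ)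
      (15 / 16 * ∫ φ in (0)..π, integrand'' m u φ) u := fun u =>
    (intervalIntegral.hasDerivAt_integral_of_continuous_deriv
      (continuous_integrand' m).uncurry_left (continuous_integrand'' m)
      (hasDerivAt_integrand' m) u).const_mul _
  rw [show deriv (hyperbolicEigenfunction m) = _ from funext fun u => (hv u).deriv]
  refine ⟨(hv u).differentiableAt, (hv' u).differentiableAt, ?_⟩
  have hs : sinh u ≠ 0 := (sinh_pos_iff.2 hu).ne'
  rw [(hv' u).deriv,
    show hyperbolicEigenfunction m u = 15 / 16 * ∫ φ in (0)..π, integrand m u φ from rfl]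
  field_simp
  linear_combination integral_radialOperator_eq_zero m u
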